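/- arXiv:2102.10673 — 2 statements merged into one kernel-verified Lean document; each statement's English description precedes it below -/
import Mathlib

section
/- Let X be a Bernoulli random variable with P(X=1) = min(r,1) for some r ≥ 0, and let Z be a Poisson random variable with mean q, coupled via a common uniform U on [0,1] by X = 1(U > 1 - min(r,1)) and Z = G⁻¹(U; q), where G⁻¹(·;q) is the generalized inverse of the Poisson(q) CDF. Then P(|X - Z| ≥ 1) = |1 - min(r,1) - e^{-q}| + min( min(r,1), e^{-q}(e^{q} - 1 - q) ). -/
open MeasureTheory

/-- The CDF of a Poisson distribution with mean `q`, evaluated at `m`. -/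
noncomputable def poissonCDF (q : ℝ) (m : ℕ) : ℝ :=
  ∑ i ∈ Finset.range (m + 1), Real.exp (-q) * q ^ i / (Nat.factorial i)

/-- The generalized inverse `G⁻¹(u; q) = inf {m : G(m; q) ≥ u}` of the Poisson CDF. -/
noncomputable def poissonInvCDF (q : ℝ) (u : ℝ) : ℕ :=
  sInf {m : ℕ | u ≤ poissonCDF q m}

/-!
Put `t = 1 - min r 1`, `a = G(0; q) = e^{-q}` and `b = G(1; q) = e^{-q}(1 + q)`. For `u < 1` the
generalized inverse satisfies `Z ≤ m ↔ u ≤ G(m; q)`, so `Z = 0 ↔ u ≤ a` and `Z ≤ 1 ↔ u ≤ b`, while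
`X = 1 ↔ t < u`. As `X` and `Z` are integers, `|X - Z| ≥ 1` means `X ≠ Z`, which happens exactly
when `u` lies between `t` and `a` (one of them is `0`, the other `1`) or when `max t b < u` (then
`X = 1` and `Z ≥ 2`). These two intervals are disjoint because `a ≤ b`, and their lengths are
`|t - a|` and `1 - max t b = min (1 - t) (1 - b)`.
-/

open Set Interval

lemma Nat.sInf_le_iff_of_monotone {α : Type*} [Preorder α] {F : ℕ → α} (hF : Monotone F)
    {u : α} (hu : ∃ m, u ≤ F m) (m : ℕ) : sInf {k | u ≤ F k} ≤ m ↔ u ≤ F m :=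
  ⟨fun h => le_trans (Nat.sInf_mem hu) (hF h), fun h => Nat.sInf_le h⟩

lemma one_le_abs_natCast_sub_natCast_iff {m n : ℕ} : 1 ≤ |(m : ℝ) - n| ↔ m ≠ n := by
  refine ⟨by rintro h rfl; norm_num at h, fun h => ?_⟩
  have : (m : ℤ) - n ≠ 0 := sub_ne_zero.2 (Nat.cast_injective.ne h)
  exact_mod_cast Int.one_le_abs this

section Poisson

variable {q : ℝ}

lemma hasSum_poissonCDF_terms (hq : 0 ≤ q) :
    HasSum (fun i : ℕ => Real.exp (-q) * q ^ i / (Nat.factorial i)) 1 := by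
  simpa [Real.coe_toNNReal q hq] using ProbabilityTheory.hasSum_one_poissonMeasure q.toNNReal

lemma monotone_poissonCDF (hq : 0 ≤ q) : Monotone (poissonCDF q) := fun _ _ h =>
  Finset.sum_le_sum_of_subset_of_nonneg (Finset.range_subset_range.2 (by omega))
    fun _ _ _ => by positivity

lemma poissonCDF_le_one (hq : 0 ≤ q) (m : ℕ) : poissonCDF q m ≤ 1 :=
  sum_le_hasSum _ (fun _ _ => by positivity) (hasSum_poissonCDF_terms hq)

lemma tendsto_poissonCDF (hq : 0 ≤ q) : Filter.Tendsto (poissonCDF q) Filter.atTop (nhds 1) :=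
  (hasSum_poissonCDF_terms hq).tendsto_sum_nat.comp (Filter.tendsto_add_atTop_nat 1)

lemma exists_le_poissonCDF (hq : 0 ≤ q) {u : ℝ} (hu : u < 1) : ∃ m, u ≤ poissonCDF q m :=
  ((tendsto_poissonCDF hq).eventually (eventually_ge_nhds hu)).exists

lemma poissonCDF_zero (q : ℝ) : poissonCDF q 0 = Real.exp (-q) := by
  simp [poissonCDF]

lemma one_sub_poissonCDF_one (q : ℝ) :
    1 - poissonCDF q 1 = Real.exp (-q) * (Real.exp q - 1 - q) := by
  have : Real.exp (-q) * Real.exp q = 1 := by rw [← Real.exp_add, neg_add_cancel, Real.exp_zero]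
  simp only [poissonCDF, Nat.reduceAdd, Finset.sum_range_succ, Finset.range_one,
    Finset.sum_singleton, pow_zero, pow_one, Nat.factorial_zero, Nat.factorial_one, Nat.cast_one,
    mul_one, div_one]
  linear_combination -this

lemma poissonInvCDF_le_iff (hq : 0 ≤ q) {u : ℝ} (hu : u < 1) (m : ℕ) :
    poissonInvCDF q u ≤ m ↔ u ≤ poissonCDF q m :=
  Nat.sInf_le_iff_of_monotone (monotone_poissonCDF hq) (exists_le_poissonCDF hq hu) m

end Poisson

lemma one_le_abs_coupling_sub_iff {q t u : ℝ} (hq : 0 ≤ q) (hu : u < 1) :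
    1 ≤ |(if t < u then (1 : ℝ) else 0) - (poissonInvCDF q u : ℝ)| ↔
      u ∈ Ι t (poissonCDF q 0) ∪ Ioc (max t (poissonCDF q 1)) 1 := by
  have hZ0 : poissonInvCDF q u = 0 ↔ u ≤ poissonCDF q 0 := by
    rw [← Nat.le_zero, poissonInvCDF_le_iff hq hu]
  have hZ1 : poissonInvCDF q u = 1 ↔ poissonCDF q 0 < u ∧ u ≤ poissonCDF q 1 := by
    rw [← poissonInvCDF_le_iff hq hu, ← not_le, ← poissonInvCDF_le_iff hq hu]
    omega
  have hab : poissonCDF q 0 ≤ poissonCDF q 1 := monotone_poissonCDF hq zero_le_one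
  have hX : (if t < u then (1 : ℝ) else 0) = ((if t < u then 1 else 0 : ℕ) : ℝ) := by
    push_cast; rfl
  rw [hX, one_le_abs_natCast_sub_natCast_iff, mem_union, mem_uIoc, mem_Ioc, max_lt_iff]
  split_ifs with htu
  · rw [ne_comm, Ne, hZ1]
    grind
  · rw [ne_comm, Ne, hZ0]
    grind

lemma volume_uIoc_union_Ioc_max {t a b : ℝ} (hab : a ≤ b) (ht : t ≤ 1) (hb : b ≤ 1) :
    volume (Ι t a ∪ Ioc (max t b) 1) = ENNReal.ofReal (|a - t| + (1 - max t b)) := by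
  have hdisj : Disjoint (Ι t a) (Ioc (max t b) 1) :=
    disjoint_left.2 fun _ hx hx' => (uIoc_subset_uIcc hx).2.not_gt <|
      (max_le_max_left t hab).trans_lt hx'.1
  rw [measure_union hdisj measurableSet_Ioc, Real.volume_uIoc, Real.volume_Ioc,
    ENNReal.ofReal_add (abs_nonneg _) (sub_nonneg.2 (max_le ht hb))]

theorem bernoulli_poisson_coupling_eq (r q : ℝ) (hr : 0 ≤ r) (hq : 0 ≤ q) :
    (volume.restrict (Set.Icc (0 : ℝ) 1))
      {u : ℝ | 1 ≤ |(if 1 - min r 1 < u then (1 : ℝ) else 0) - (poissonInvCDF q u : ℝ)|}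
    = ENNReal.ofReal
        (|1 - min r 1 - Real.exp (-q)|
          + min (min r 1) (Real.exp (-q) * (Real.exp q - 1 - q))) := by
  set t := 1 - min r 1
  have ht0 : 0 ≤ t := sub_nonneg.2 (min_le_right r 1)
  have ht1 : t ≤ 1 := sub_le_self _ (le_min hr zero_le_one)
  have ha0 : 0 ≤ poissonCDF q 0 := poissonCDF_zero q ▸ (Real.exp_pos _).le
  set S := Ι t (poissonCDF q 0) ∪ Ioc (max t (poissonCDF q 1)) 1
  have hS : S ⊆ Icc 0 1 := union_subset
    (uIoc_subset_uIcc.trans (uIcc_subset_Icc ⟨ht0, ht1⟩ ⟨ha0, poissonCDF_le_one hq 0⟩))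
    (Ioc_subset_Icc_self.trans (Icc_subset_Icc_left (le_max_of_le_left ht0)))
  calc _ = volume.restrict (Ico 0 1)
        {u : ℝ | 1 ≤ |(if t < u then (1 : ℝ) else 0) - (poissonInvCDF q u : ℝ)|} := by
        rw [Measure.restrict_congr_set Ico_ae_eq_Icc]
    _ = volume.restrict (Ico 0 1) S := measure_congr <| by
        filter_upwards [ae_restrict_mem measurableSet_Ico] with u hu
        exact propext (one_le_abs_coupling_sub_iff hq hu.2)
    _ = volume S := by rw [Measure.restrict_congr_set Ico_ae_eq_Icc, Measure.restrict_eq_self _ hS]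
    _ = ENNReal.ofReal (|poissonCDF q 0 - t| + (1 - max t (poissonCDF q 1))) :=
        volume_uIoc_union_Ioc_max (monotone_poissonCDF hq zero_le_one) ht1 (poissonCDF_le_one hq 1)
    _ = _ := by
        rw [← min_sub_sub_left, sub_sub_cancel, one_sub_poissonCDF_one, poissonCDF_zero,
          abs_sub_comm]
end

section
/- Let U be uniform on [0,1] and for λ ≥ 0 let G⁻¹(u;λ) denote the generalized inverse of the Poisson(λ) CDF. Then for any λ, μ ≥ 0, E[ |G⁻¹(U;λ) − G⁻¹(U;μ)| ] = |λ − μ|. -/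
open MeasureTheory

open Set Filter Topology ProbabilityTheory
open scoped NNReal

/-!
Inverse transform sampling: for a probability measure `P` on `ℕ` with distribution function
`F m = P (Iic m)`, the generalized inverse of `F` pushes the uniform distribution on `(0, 1)`
forward to `P`. Hence `∫₀¹ G⁻¹(u; λ) du` is the Poisson mean `λ`. Since
`Po(μ) = Po(λ) ∗ Po(μ - λ)`, the Poisson CDF decreases in the rate, so `λ ≤ μ` gives
`G⁻¹(u; λ) ≤ G⁻¹(u; μ)`; the absolute value can then be dropped and the integral of the
difference is `μ - λ`.
-/

theorem MeasureTheory.Measure.conv_apply_le_of_isLowerSet {M : Type*} [AddMonoid M]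
    [PartialOrder M] [CanonicallyOrderedAdd M] [MeasurableSpace M] [MeasurableAdd₂ M]
    (μ ν : Measure M) [IsProbabilityMeasure ν] {s : Set M} (hs : MeasurableSet s)
    (hs' : IsLowerSet s) : (μ ∗ ν) s ≤ μ s := by
  have hsub : (fun x : M × M ↦ x.1 + x.2) ⁻¹' s ⊆ s ×ˢ univ :=
    fun x hx ↦ ⟨hs' le_self_add hx, trivial⟩
  calc (μ ∗ ν) s = μ.prod ν ((fun x : M × M ↦ x.1 + x.2) ⁻¹' s) :=
        Measure.map_apply measurable_add hs
    _ ≤ μ.prod ν (s ×ˢ univ) := measure_mono hsub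
    _ = μ s := by rw [Measure.prod_prod, measure_univ, mul_one]

noncomputable def natQuantile (F : ℕ → ℝ) (u : ℝ) : ℕ :=
  sInf {m | u ≤ F m}

section natQuantile

variable {F G : ℕ → ℝ} {u : ℝ}

theorem le_apply_natQuantile (hu : ∃ m, u ≤ F m) : u ≤ F (natQuantile F u) :=
  Nat.sInf_mem hu

theorem natQuantile_le_iff (hF : Monotone F) (hu : ∃ m, u ≤ F m) (m : ℕ) :
    natQuantile F u ≤ m ↔ u ≤ F m :=
  ⟨fun h ↦ (le_apply_natQuantile hu).trans (hF h), fun h ↦ Nat.sInf_le h⟩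

theorem natQuantile_le_natQuantile (hGF : ∀ m, G m ≤ F m) (hu : ∃ m, u ≤ G m) :
    natQuantile F u ≤ natQuantile G u :=
  Nat.sInf_le <| (le_apply_natQuantile hu).trans (hGF _)

theorem monotoneOn_natQuantile : MonotoneOn (natQuantile F) {u | ∃ m, u ≤ F m} :=
  fun _ _ _ hv huv ↦ csInf_le_csInf' hv fun _ hm ↦ huv.trans hm

end natQuantile

section natCDF

variable (P : Measure ℕ) [IsProbabilityMeasure P]

theorem exists_le_measureReal_Iic {u : ℝ} (hu : u < 1) : ∃ m, u ≤ P.real (Iic m) := by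
  have hlim : Tendsto (P ∘ Iic) atTop (𝓝 1) := by
    simpa only [iUnion_Iic, measure_univ] using tendsto_measure_iUnion_atTop (μ := P) monotone_Iic
  obtain ⟨m, hm⟩ := (hlim.eventually (eventually_gt_nhds (ENNReal.ofReal_lt_one.2 hu))).exists
  exact ⟨m, (ENNReal.ofReal_le_iff_le_toReal (measure_ne_top _ _)).1 hm.le⟩

theorem aemeasurable_natQuantile_measureReal_Iic :
    AEMeasurable (natQuantile fun m ↦ P.real (Iic m)) (volume.restrict (Ioo (0 : ℝ) 1)) :=
  aemeasurable_restrict_of_monotoneOn measurableSet_Ioo <|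
    monotoneOn_natQuantile.mono fun _ hu ↦ exists_le_measureReal_Iic P hu.2

theorem map_natQuantile_measureReal_Iic :
    (volume.restrict (Ioo (0 : ℝ) 1)).map (natQuantile fun m ↦ P.real (Iic m)) = P := by
  set F := fun m ↦ P.real (Iic m)
  have hF : Monotone F := fun _ _ h ↦ measureReal_mono (Iic_subset_Iic.2 h)
  refine (Measure.ext_of_Iic _ _ fun k ↦ ?_).symm
  have hlevel : natQuantile F ⁻¹' Iic k ∩ Ioo 0 1 = Iic (F k) ∩ Ioo 0 1 := by
    ext u
    simp only [mem_inter_iff, mem_preimage, mem_Iic, and_congr_left_iff]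
    exact fun hu ↦ natQuantile_le_iff hF (exists_le_measureReal_Iic P hu.2) k
  rw [Measure.map_apply_of_aemeasurable (aemeasurable_natQuantile_measureReal_Iic P)
    measurableSet_Iic, Measure.restrict_apply' measurableSet_Ioo, hlevel,
    ← Measure.restrict_apply' measurableSet_Ioo,
    Measure.restrict_congr_set Ioo_ae_eq_Ioc, Measure.restrict_apply' measurableSet_Ioc,
    inter_comm, Ioc_inter_Iic, min_eq_right measureReal_le_one, Real.volume_Ioc, sub_zero,
    ofReal_measureReal]

theorem integrableOn_natQuantile_measureReal_Iic (hP : Integrable (fun n : ℕ ↦ (n : ℝ)) P) :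
    IntegrableOn (fun u ↦ (natQuantile (fun m ↦ P.real (Iic m)) u : ℝ)) (Ioo 0 1) := by
  rw [← map_natQuantile_measureReal_Iic P] at hP
  exact (integrable_map_measure (g := fun n : ℕ ↦ (n : ℝ)) .of_discrete
    (aemeasurable_natQuantile_measureReal_Iic P)).1 hP

theorem setIntegral_natQuantile_measureReal_Iic :
    ∫ u in Ioo 0 1, (natQuantile (fun m ↦ P.real (Iic m)) u : ℝ) = ∫ n, (n : ℝ) ∂P := by
  conv_rhs => rw [← map_natQuantile_measureReal_Iic P]
  exact (integral_map (f := fun n : ℕ ↦ (n : ℝ)) (aemeasurable_natQuantile_measureReal_Iic P)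
    .of_discrete).symm

end natCDF

theorem poissonCDF_eq_measureReal_Iic (r : ℝ≥0) (m : ℕ) :
    poissonCDF r m = (poissonMeasure r).real (Iic m) := by
  rw [poissonCDF, Nat.range_succ_eq_Iic, ← Finset.coe_Iic, ← sum_measureReal_singleton]
  simp only [poissonMeasure_real_singleton]

theorem poissonInvCDF_eq_natQuantile (r : ℝ≥0) :
    poissonInvCDF r = natQuantile fun m ↦ (poissonMeasure r).real (Iic m) := by
  simp only [← poissonCDF_eq_measureReal_Iic]
  rfl

theorem poissonCDF_antitone (m : ℕ) : Antitone fun r : ℝ≥0 ↦ poissonCDF r m := by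
  intro r s hrs
  simp only [poissonCDF_eq_measureReal_Iic]
  rw [← add_tsub_cancel_of_le hrs, ← poissonMeasure_conv_poissonMeasure]
  exact ENNReal.toReal_mono (measure_ne_top _ _)
    (Measure.conv_apply_le_of_isLowerSet _ _ measurableSet_Iic (isLowerSet_Iic m))

theorem hasSum_poissonPMF_smul_natCast (r : ℝ≥0) :
    HasSum (fun n : ℕ ↦ (Real.exp (-r) * r ^ n / n.factorial) • (n : ℝ)) r := by
  set p := fun n : ℕ ↦ Real.exp (-r) * r ^ n / n.factorial
  have hshift : ∀ n : ℕ, p (n + 1) • ((n + 1 : ℕ) : ℝ) = r * p n := by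
    intro n
    simp only [p, Nat.factorial_succ, smul_eq_mul]
    push_cast
    field_simp
    ring
  have h := ((hasSum_one_poissonMeasure r).mul_left (r : ℝ)).congr_fun hshift
  simpa using (hasSum_nat_add_iff (f := fun n : ℕ ↦ p n • (n : ℝ)) 1).1 h

theorem integrable_natCast_poissonMeasure (r : ℝ≥0) :
    Integrable (fun n : ℕ ↦ (n : ℝ)) (poissonMeasure r) := by
  rw [integrable_poissonMeasure_iff]
  simpa using (hasSum_poissonPMF_smul_natCast r).summable

theorem integral_natCast_poissonMeasure (r : ℝ≥0) :
    ∫ n, (n : ℝ) ∂poissonMeasure r = r :=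
  (hasSum_integral_poissonMeasure (integrable_natCast_poissonMeasure r)).unique
    (hasSum_poissonPMF_smul_natCast r)

theorem poissonInvCDF_mono {r s : ℝ≥0} (hrs : r ≤ s) {u : ℝ} (hu : u < 1) :
    poissonInvCDF r u ≤ poissonInvCDF s u := by
  refine natQuantile_le_natQuantile (F := poissonCDF r) (fun m ↦ poissonCDF_antitone m hrs) ?_
  simpa only [poissonCDF_eq_measureReal_Iic] using exists_le_measureReal_Iic _ hu

theorem integrableOn_poissonInvCDF (r : ℝ≥0) :
    IntegrableOn (fun u ↦ (poissonInvCDF r u : ℝ)) (Ioo 0 1) := by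
  rw [poissonInvCDF_eq_natQuantile]
  exact integrableOn_natQuantile_measureReal_Iic _ (integrable_natCast_poissonMeasure r)

theorem setIntegral_poissonInvCDF (r : ℝ≥0) :
    ∫ u in Ioo 0 1, (poissonInvCDF r u : ℝ) = r := by
  rw [poissonInvCDF_eq_natQuantile, setIntegral_natQuantile_measureReal_Iic,
    integral_natCast_poissonMeasure]

theorem poisson_inverse_coupling_mean (lam mu : ℝ) (hlam : 0 ≤ lam) (hmu : 0 ≤ mu) :
    ∫ u in Set.Icc (0 : ℝ) 1,
        |(poissonInvCDF lam u : ℝ) - (poissonInvCDF mu u : ℝ)| = |lam - mu| := by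
  lift lam to ℝ≥0 using hlam
  lift mu to ℝ≥0 using hmu
  wlog h : lam ≤ mu generalizing lam mu
  · simpa only [abs_sub_comm] using this mu lam (le_of_not_ge h)
  have hcomonotone : EqOn (fun u ↦ |(poissonInvCDF lam u : ℝ) - poissonInvCDF mu u|)
      (fun u ↦ (poissonInvCDF mu u : ℝ) - poissonInvCDF lam u) (Ioo 0 1) := fun u hu ↦ by
    dsimp only
    rw [abs_sub_comm, abs_of_nonneg (sub_nonneg.2 (Nat.cast_le.2 (poissonInvCDF_mono h hu.2)))]
  rw [integral_Icc_eq_integral_Ioo, setIntegral_congr_fun measurableSet_Ioo hcomonotone,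
    integral_sub (integrableOn_poissonInvCDF mu) (integrableOn_poissonInvCDF lam),
    setIntegral_poissonInvCDF, setIntegral_poissonInvCDF, abs_sub_comm,
    abs_of_nonneg (sub_nonneg.2 (NNReal.coe_le_coe.2 h))]
end
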